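/- arXiv:0805.3497 — 5 statements merged into one kernel-verified Lean document; each statement's English description precedes it below -/
import Mathlib

section
/- Each QR-algebra T decomposes as a direct product (orthogonal direct sum of pairwise orthogonal ideals) of its unique maximal abelian ideal I₀ and finitely many non-abelian simple ideals I₁,...,I_r, and this decomposition is unique up to the order of the simple factors. -/
open scoped RealInnerProductSpace

variable {T : Type*} [NormedAddCommGroup T] [InnerProductSpace ℝ T]

/-- An ideal of the QR-algebra (T, *): a subspace I with T * I ⊆ I. -/
def IsIdeal (mul : T →ₗ[ℝ] T →ₗ[ℝ] T) (I : Submodule ℝ T) : Prop :=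
  ∀ x y, y ∈ I → mul x y ∈ I

/-- An abelian ideal: an ideal on which the product vanishes. -/
def IsAbelianIdeal (mul : T →ₗ[ℝ] T →ₗ[ℝ] T) (I : Submodule ℝ T) : Prop :=
  IsIdeal mul I ∧ ∀ x ∈ I, ∀ y ∈ I, mul x y = 0

/-- A simple ideal: a nonzero ideal whose only ideals are {0} and itself. -/
def IsSimpleIdeal (mul : T →ₗ[ℝ] T →ₗ[ℝ] T) (I : Submodule ℝ T) : Prop :=
  IsIdeal mul I ∧ I ≠ ⊥ ∧
    ∀ J : Submodule ℝ T, J ≤ I → (∀ x ∈ I, ∀ y ∈ J, mul x y ∈ J) → J = ⊥ ∨ J = I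


/-! In a QR-algebra the product is anticommutative and invariant, so the orthogonal complement
of an ideal is an ideal and ideals meeting trivially annihilate each other. An abelian ideal `J`
is central, since `‖j * x‖² = ⟪x, (j * x) * j⟫ = 0`; hence the maximal abelian ideal is the centre
`ker mul`. A non-abelian simple ideal `S` is spanned by `S * S`, so invariance makes it orthogonal
to the centre and to every other simple ideal; in particular there are only finitely many.
Minimal ideals are simple (because `T = M ⊕ Mᗮ` with `Mᗮ * M = 0`), so a nonzero orthogonal
complement of the sum of the centre and the non-abelian simple ideals would contain a simple
ideal orthogonal to itself. The same orthogonality forces any decomposition to have the centre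
as abelian part and exactly the non-abelian simple ideals as factors. -/

open Submodule Function

structure IsQRProduct (mul : T →ₗ[ℝ] T →ₗ[ℝ] T) : Prop where
  mul_self : ∀ X, mul X X = 0
  inner_mul_left : ∀ X Y Z, ⟪mul X Y, Z⟫ = ⟪X, mul Y Z⟫

structure IsIdealDecomposition {ι : Type*} (mul : T →ₗ[ℝ] T →ₗ[ℝ] T) (I₀ : Submodule ℝ T)
    (I : ι → Submodule ℝ T) : Prop where
  isAbelianIdeal : IsAbelianIdeal mul I₀
  isSimpleIdeal : ∀ i, IsSimpleIdeal mul (I i)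
  not_abelian : ∀ i, ¬ ∀ x ∈ I i, ∀ y ∈ I i, mul x y = 0
  isOrtho_abelian : ∀ i, I₀ ⟂ I i
  pairwise_isOrtho : Pairwise fun i j => I i ⟂ I j
  sup_iSup_eq_top : I₀ ⊔ ⨆ i, I i = ⊤

def nonAbelianSimpleIdeals (mul : T →ₗ[ℝ] T →ₗ[ℝ] T) : Set (Submodule ℝ T) :=
  {S | IsSimpleIdeal mul S ∧ ¬ ∀ x ∈ S, ∀ y ∈ S, mul x y = 0}

theorem Function.Injective.exists_equiv_of_range_eq {α β γ : Type*} {f : α → γ} {g : β → γ}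
    (hf : Injective f) (hg : Injective g) (h : Set.range f = Set.range g) :
    ∃ e : α ≃ β, ∀ a, f a = g (e a) :=
  ⟨(Equiv.ofInjective f hf).trans ((Equiv.setCongr h).trans (Equiv.ofInjective g hg).symm),
    fun a => by simp [Equiv.apply_ofInjective_symm]⟩

variable {mul : T →ₗ[ℝ] T →ₗ[ℝ] T} {I J : Submodule ℝ T}

namespace IsIdeal

theorem inf (hI : IsIdeal mul I) (hJ : IsIdeal mul J) : IsIdeal mul (I ⊓ J) :=
  fun x y hy => ⟨hI x y hy.1, hJ x y hy.2⟩

theorem sup (hI : IsIdeal mul I) (hJ : IsIdeal mul J) : IsIdeal mul (I ⊔ J) :=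
  fun x y hy => by
    obtain ⟨a, ha, b, hb, rfl⟩ := mem_sup.1 hy
    rw [map_add]
    exact add_mem_sup (hI x a ha) (hJ x b hb)

theorem iSup {ι : Sort*} {V : ι → Submodule ℝ T} (hV : ∀ i, IsIdeal mul (V i)) :
    IsIdeal mul (⨆ i, V i) :=
  fun x _ hy => (iSup_le fun i z hz => mem_iSup_of_mem i (hV i x z hz) :
    (⨆ i, V i) ≤ (⨆ i, V i).comap (mul x)) hy

end IsIdeal

theorem IsSimpleIdeal.eq_bot_or_eq {S : Submodule ℝ T} (hS : IsSimpleIdeal mul S)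
    (hJ : IsIdeal mul J) (hJS : J ≤ S) : J = ⊥ ∨ J = S :=
  hS.2.2 J hJS fun x _ y hy => hJ x y hy

theorem IsSimpleIdeal.map₂_self_eq {S : Submodule ℝ T} (hS : IsSimpleIdeal mul S)
    (hna : ¬ ∀ x ∈ S, ∀ y ∈ S, mul x y = 0) : map₂ mul S S = S := by
  have hle : map₂ mul S S ≤ S := map₂_le.2 fun a _ b hb => hS.1 a b hb
  refine (hS.2.2 _ hle fun x hx y hy => apply_mem_map₂ mul hx (hle hy)).resolve_left ?_
  intro hbot
  exact hna fun x hx y hy => (mem_bot ℝ).1 (hbot ▸ apply_mem_map₂ mul hx hy)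

namespace IsQRProduct

theorem mul_swap (hmul : IsQRProduct mul) (x y : T) : mul x y = -mul y x := by
  have h := hmul.mul_self (x + y)
  simp only [map_add, LinearMap.add_apply, hmul.mul_self, zero_add, add_zero] at h
  exact eq_neg_of_add_eq_zero_right h

theorem mul_mem_of_left (hmul : IsQRProduct mul) (hI : IsIdeal mul I) {x : T} (hx : x ∈ I)
    (y : T) : mul x y ∈ I := by
  rw [hmul.mul_swap]
  exact neg_mem (hI y x hx)

theorem inner_mul_cyclic (hmul : IsQRProduct mul) (x y z : T) :
    ⟪mul x y, z⟫ = ⟪y, mul z x⟫ := by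
  rw [hmul.inner_mul_left, real_inner_comm, hmul.inner_mul_left]

theorem isIdeal_orthogonal (hmul : IsQRProduct mul) (hI : IsIdeal mul I) : IsIdeal mul Iᗮ :=
  fun x y hy => (mem_orthogonal I _).2 fun u hu => by
    rw [real_inner_comm, hmul.inner_mul_cyclic,
      (mem_orthogonal' I y).1 hy _ (hmul.mul_mem_of_left hI hu x)]

theorem mul_eq_zero_of_disjoint (hmul : IsQRProduct mul) (hI : IsIdeal mul I)
    (hJ : IsIdeal mul J) (hIJ : Disjoint I J) {x y : T} (hx : x ∈ I) (hy : y ∈ J) :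
    mul x y = 0 :=
  disjoint_def.1 hIJ _ (hmul.mul_mem_of_left hI hx y) (hJ x y hy)

theorem isOrtho_map₂ (hmul : IsQRProduct mul) {K : Submodule ℝ T}
    (h : ∀ x ∈ I, ∀ y ∈ J, mul x y = 0) : I ⟂ map₂ mul J K :=
  (isOrtho_iff_le.2 <| map₂_le.2 fun a ha b _ => (mem_orthogonal I _).2 fun x hx => by
    rw [← hmul.inner_mul_left, h x hx a ha, inner_zero_left]).symm

theorem le_ker_of_isAbelianIdeal (hmul : IsQRProduct mul) (hJ : IsAbelianIdeal mul J) :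
    J ≤ LinearMap.ker mul := by
  intro j hj
  refine LinearMap.mem_ker.2 (LinearMap.ext fun x => inner_self_eq_zero (𝕜 := ℝ).1 ?_)
  rw [hmul.inner_mul_cyclic, hJ.2 _ (hmul.mul_mem_of_left hJ.1 hj x) j hj, inner_zero_right]

theorem isAbelianIdeal_ker (hmul : IsQRProduct mul) : IsAbelianIdeal mul (LinearMap.ker mul) :=
  ⟨fun x z hz => by
    rw [LinearMap.mem_ker, hmul.mul_swap x z, LinearMap.mem_ker.1 hz, LinearMap.zero_apply,
      neg_zero, map_zero],
   fun x hx y _ => by rw [LinearMap.mem_ker.1 hx, LinearMap.zero_apply]⟩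

theorem ker_isOrtho (hmul : IsQRProduct mul) {S : Submodule ℝ T} (hS : IsSimpleIdeal mul S)
    (hna : ¬ ∀ x ∈ S, ∀ y ∈ S, mul x y = 0) : LinearMap.ker mul ⟂ S := by
  rw [← hS.map₂_self_eq hna]
  exact hmul.isOrtho_map₂ fun x hx y _ => by rw [LinearMap.mem_ker.1 hx, LinearMap.zero_apply]

theorem isOrtho_of_ne (hmul : IsQRProduct mul) {S S' : Submodule ℝ T}
    (hS : IsSimpleIdeal mul S) (hS' : IsSimpleIdeal mul S')
    (hna' : ¬ ∀ x ∈ S', ∀ y ∈ S', mul x y = 0) (hne : S ≠ S') : S ⟂ S' := by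
  have hinf : IsIdeal mul (S ⊓ S') := hS.1.inf hS'.1
  have hdisj : S ⊓ S' = ⊥ := by
    rcases hS.eq_bot_or_eq hinf inf_le_left with h | h
    · exact h
    rcases hS'.eq_bot_or_eq hinf inf_le_right with h' | h'
    · exact h'
    exact absurd (h.symm.trans h') hne
  rw [← hS'.map₂_self_eq hna']
  exact hmul.isOrtho_map₂ fun x hx y hy =>
    hmul.mul_eq_zero_of_disjoint hS.1 hS'.1 (disjoint_iff.2 hdisj) hx hy

theorem isIdeal_of_le (hmul : IsQRProduct mul) {M : Submodule ℝ T} [M.HasOrthogonalProjection]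
    (hM : IsIdeal mul M) (hJM : J ≤ M) (hJ : ∀ x ∈ M, ∀ y ∈ J, mul x y ∈ J) :
    IsIdeal mul J := by
  intro x y hy
  obtain ⟨m, hm, n, hn, rfl⟩ := mem_sup.1 (show x ∈ M ⊔ Mᗮ by
    rw [sup_orthogonal_of_hasOrthogonalProjection]; trivial)
  rw [map_add, LinearMap.add_apply, hmul.mul_eq_zero_of_disjoint (hmul.isIdeal_orthogonal hM) hM
    M.orthogonal_disjoint.symm hn (hJM hy), add_zero]
  exact hJ m hm y hy

variable [FiniteDimensional ℝ T]

theorem exists_isSimpleIdeal_le (hmul : IsQRProduct mul) (hJ : IsIdeal mul J) (hJ0 : J ≠ ⊥) :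
    ∃ S, IsSimpleIdeal mul S ∧ S ≤ J := by
  obtain ⟨M, ⟨hM, hM0, hMJ⟩, hmin⟩ := wellFounded_lt.has_min
    {K : Submodule ℝ T | IsIdeal mul K ∧ K ≠ ⊥ ∧ K ≤ J} ⟨J, hJ, hJ0, le_rfl⟩
  refine ⟨M, ⟨hM, hM0, fun K hKM hK => ?_⟩, hMJ⟩
  refine or_iff_not_imp_left.2 fun hK0 => hKM.eq_of_not_lt fun hlt => ?_
  exact hmin K ⟨hmul.isIdeal_of_le hM hKM hK, hK0, hKM.trans hMJ⟩ hlt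

theorem eq_top_of_forall_isSimpleIdeal_le (hmul : IsQRProduct mul) (hJ : IsIdeal mul J)
    (h : ∀ S, IsSimpleIdeal mul S → S ≤ J) : J = ⊤ := by
  rw [← orthogonal_eq_bot_iff]
  by_contra hne
  obtain ⟨S, hS, hSJ⟩ := hmul.exists_isSimpleIdeal_le (hmul.isIdeal_orthogonal hJ) hne
  exact hS.2.1 (eq_bot_iff.2 ((le_inf (h S hS) hSJ).trans (inf_orthogonal_eq_bot J).le))

theorem finite_nonAbelianSimpleIdeals (hmul : IsQRProduct mul) :
    (nonAbelianSimpleIdeals mul).Finite := by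
  refine WellFoundedGT.finite_of_sSupIndep ((sSupIndep_iff _).2 ?_)
  refine OrthogonalFamily.independent (OrthogonalFamily.of_pairwise fun S S' hne => ?_)
  exact hmul.isOrtho_of_ne S.2.1 S'.2.1 S'.2.2 (Subtype.coe_ne_coe.2 hne)

theorem exists_isIdealDecomposition (hmul : IsQRProduct mul) :
    ∃ (r : ℕ) (I : Fin r → Submodule ℝ T), IsIdealDecomposition mul (LinearMap.ker mul) I := by
  obtain ⟨r, I, hI⟩ := hmul.finite_nonAbelianSimpleIdeals.fin_embedding
  have hmem : ∀ i, I i ∈ nonAbelianSimpleIdeals mul := fun i => hI ▸ ⟨i, rfl⟩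
  refine ⟨r, I, hmul.isAbelianIdeal_ker, fun i => (hmem i).1, fun i => (hmem i).2,
    fun i => hmul.ker_isOrtho (hmem i).1 (hmem i).2,
    fun i j hij => hmul.isOrtho_of_ne (hmem i).1 (hmem j).1 (hmem j).2 (I.injective.ne hij), ?_⟩
  refine hmul.eq_top_of_forall_isSimpleIdeal_le
    (hmul.isAbelianIdeal_ker.1.sup (IsIdeal.iSup fun i => (hmem i).1.1)) fun S hS => ?_
  by_cases hna : ∀ x ∈ S, ∀ y ∈ S, mul x y = 0
  · exact le_sup_of_le_left (hmul.le_ker_of_isAbelianIdeal ⟨hS.1, hna⟩)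
  · obtain ⟨i, rfl⟩ : S ∈ Set.range I := hI ▸ ⟨hS, hna⟩
    exact le_sup_of_le_right (le_iSup I i)

end IsQRProduct

namespace IsIdealDecomposition

variable {ι : Type*} {I₀ : Submodule ℝ T} {I : ι → Submodule ℝ T}

theorem injective (hD : IsIdealDecomposition mul I₀ I) : Injective I :=
  (OrthogonalFamily.of_pairwise hD.pairwise_isOrtho).independent.injective
    fun i => (hD.isSimpleIdeal i).2.1

theorem eq_ker (hD : IsIdealDecomposition mul I₀ I) (hmul : IsQRProduct mul) :
    I₀ = LinearMap.ker mul := by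
  have hI₀ : I₀ ⟂ ⨆ i, I i := isOrtho_iSup_right.2 hD.isOrtho_abelian
  have hker : LinearMap.ker mul ⟂ ⨆ i, I i := isOrtho_iSup_right.2 fun i =>
    hmul.ker_isOrtho (hD.isSimpleIdeal i) (hD.not_abelian i)
  refine le_antisymm (hmul.le_ker_of_isAbelianIdeal hD.isAbelianIdeal) ?_
  calc LinearMap.ker mul ≤ (I₀ ⊔ ⨆ i, I i) ⊓ (⨆ i, I i)ᗮ :=
        le_inf (hD.sup_iSup_eq_top ▸ le_top) hker.le
    _ = I₀ := by rw [sup_inf_assoc_of_le _ hI₀.le, inf_orthogonal_eq_bot, sup_bot_eq]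

theorem range_eq (hD : IsIdealDecomposition mul I₀ I) (hmul : IsQRProduct mul) :
    Set.range I = nonAbelianSimpleIdeals mul := by
  refine subset_antisymm (Set.range_subset_iff.2 fun i => ⟨hD.isSimpleIdeal i, hD.not_abelian i⟩) ?_
  rintro S ⟨hS, hna⟩
  by_contra hS_not_mem
  have hI₀ : S ⟂ I₀ := (hD.eq_ker hmul ▸ hmul.ker_isOrtho hS hna).symm
  have hI : S ⟂ ⨆ i, I i := isOrtho_iSup_right.2 fun i => hmul.isOrtho_of_ne hS
    (hD.isSimpleIdeal i) (hD.not_abelian i) fun h => hS_not_mem ⟨i, h.symm⟩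
  exact hS.2.1 (isOrtho_top_right.1 (hD.sup_iSup_eq_top ▸ isOrtho_sup_right.2 ⟨hI₀, hI⟩))

end IsIdealDecomposition

/-- Each QR-algebra T decomposes as a direct product (orthogonal direct sum of
pairwise orthogonal ideals) of its unique maximal abelian ideal I₀ and finitely
many non-abelian simple ideals I₁,…,I_r, uniquely up to the order of the simple
factors. -/
theorem stmt_8 [FiniteDimensional ℝ T] (mul : T →ₗ[ℝ] T →ₗ[ℝ] T)
    (halt : ∀ X, mul X X = 0)
    (hassoc : ∀ X Y Z, ⟪mul X Y, Z⟫ = ⟪X, mul Y Z⟫) :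
    ∃ (I₀ : Submodule ℝ T) (r : ℕ) (I : Fin r → Submodule ℝ T),
      IsAbelianIdeal mul I₀ ∧
      -- I₀ is the (unique) maximal abelian ideal
      (∀ J, IsAbelianIdeal mul J → J ≤ I₀) ∧
      (∀ i, IsSimpleIdeal mul (I i)) ∧
      (∀ i, ¬ ∀ x ∈ I i, ∀ y ∈ I i, mul x y = 0) ∧
      -- the factors are pairwise orthogonal
      (∀ i, ∀ x ∈ I₀, ∀ y ∈ I i, ⟪x, y⟫ = 0) ∧
      (∀ i j, i ≠ j → ∀ x ∈ I i, ∀ y ∈ I j, ⟪x, y⟫ = 0) ∧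
      -- the factors together span T
      (I₀ ⊔ (⨆ i, I i) = ⊤) ∧
      -- uniqueness of the decomposition, up to the order of the simple factors
      (∀ (I₀' : Submodule ℝ T) (r' : ℕ) (I' : Fin r' → Submodule ℝ T),
        IsAbelianIdeal mul I₀' →
        (∀ i, IsSimpleIdeal mul (I' i)) →
        (∀ i, ¬ ∀ x ∈ I' i, ∀ y ∈ I' i, mul x y = 0) →
        (∀ i, ∀ x ∈ I₀', ∀ y ∈ I' i, ⟪x, y⟫ = 0) →
        (∀ i j, i ≠ j → ∀ x ∈ I' i, ∀ y ∈ I' j, ⟪x, y⟫ = 0) →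
        (I₀' ⊔ (⨆ i, I' i) = ⊤) →
        I₀' = I₀ ∧ ∃ e : Fin r' ≃ Fin r, ∀ i, I' i = I (e i)) := by
  have hmul : IsQRProduct mul := ⟨halt, hassoc⟩
  obtain ⟨r, I, hI⟩ := hmul.exists_isIdealDecomposition
  refine ⟨LinearMap.ker mul, r, I, hmul.isAbelianIdeal_ker,
    fun J hJ => hmul.le_ker_of_isAbelianIdeal hJ, hI.isSimpleIdeal, hI.not_abelian,
    fun i => isOrtho_iff_inner_eq.1 (hI.isOrtho_abelian i),
    fun i j hij => isOrtho_iff_inner_eq.1 (hI.pairwise_isOrtho hij), hI.sup_iSup_eq_top, ?_⟩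
  intro I₀' r' I' hab' hsimple' hna' horth₀' horth' htop'
  have hI' : IsIdealDecomposition mul I₀' I' := ⟨hab', hsimple', hna',
    fun i => isOrtho_iff_inner_eq.2 (horth₀' i),
    fun i j hij => isOrtho_iff_inner_eq.2 (horth' i j hij), htop'⟩
  exact ⟨hI'.eq_ker hmul, hI'.injective.exists_equiv_of_range_eq hI.injective
    (by rw [hI'.range_eq hmul, hI.range_eq hmul])⟩
end

section
/- Let P be a (1,1)-tensor field on a Riemannian manifold (M,g) with P² = I and g(PX,PY) = g(X,Y). Define ∇̄_X Y = ∇_X Y - (1/2)(∇_X P)(PY), where ∇ is the Levi-Civita connection. Then ∇̄ is an affine connection satisfying ∇̄P = 0 and ∇̄g = 0. -/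
/-!
Writing `∇ᴾ_X Y = P (∇_X (P Y))` for the connection conjugated by `P`, the relation `P² = I`
turns the defining formula into `∇̄ = ½ ∇ + ½ ∇ᴾ`. Conjugation by `P` preserves the connection
axioms, and, since `P` is a `g`-isometry, metric compatibility; both are preserved by affine
combinations of connections. Finally `P` interchanges `∇` and `∇ᴾ`, so it commutes with their
midpoint `∇̄`.
-/

namespace Connection

variable {R V : Type*} [CommRing R] [AddCommGroup V] [Module R V]

structure IsAffine (D : V → R → R) (nabla : V → V → V) : Prop where
  add_left : ∀ X Y Z, nabla (X + Y) Z = nabla X Z + nabla Y Z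
  add_right : ∀ X Y Z, nabla X (Y + Z) = nabla X Y + nabla X Z
  smul_left : ∀ (f : R) (X Y : V), nabla (f • X) Y = f • nabla X Y
  smul_right : ∀ (f : R) (X Y : V), nabla X (f • Y) = D X f • Y + f • nabla X Y

def IsMetric (g : V → V → R) (D : V → R → R) (nabla : V → V → V) : Prop :=
  ∀ X Y Z, D X (g Y Z) = g (nabla X Y) Z + g Y (nabla X Z)

def conj (P : V →ₗ[R] V) (nabla : V → V → V) : V → V → V :=
  fun X Y => P (nabla X (P Y))

variable {D : V → R → R} {nabla nabla₁ nabla₂ : V → V → V} {P : V →ₗ[R] V}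

theorem IsAffine.conj (h : IsAffine D nabla) (hP2 : ∀ Y, P (P Y) = Y) :
    IsAffine D (conj P nabla) where
  add_left X Y Z := by simp only [Connection.conj, h.add_left, map_add]
  add_right X Y Z := by simp only [Connection.conj, map_add, h.add_right]
  smul_left f X Y := by simp only [Connection.conj, h.smul_left, map_smul]
  smul_right f X Y := by simp only [Connection.conj, map_smul, h.smul_right, map_add, hP2]

theorem IsAffine.lineMap (h₁ : IsAffine D nabla₁) (h₂ : IsAffine D nabla₂) (t : R) :
    IsAffine D (fun X Y => (1 - t) • nabla₁ X Y + t • nabla₂ X Y) where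
  add_left X Y Z := by rw [h₁.add_left, h₂.add_left]; module
  add_right X Y Z := by rw [h₁.add_right, h₂.add_right]; module
  smul_left f X Y := by rw [h₁.smul_left, h₂.smul_left]; module
  smul_right f X Y := by rw [h₁.smul_right, h₂.smul_right]; module

theorem IsMetric.conj {g : V → V → R} (h : IsMetric g D nabla) (hP2 : ∀ Y, P (P Y) = Y)
    (hPg : ∀ X Y, g (P X) (P Y) = g X Y) : IsMetric g D (conj P nabla) := by
  have hP_left : ∀ X Y, g (P X) Y = g X (P Y) := fun X Y => by rw [← hPg X (P Y), hP2]
  have hP_right : ∀ X Y, g X (P Y) = g (P X) Y := fun X Y => by rw [← hPg (P X) Y, hP2]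
  intro X Y Z
  rw [← hPg Y Z, h X (P Y) (P Z), Connection.conj, Connection.conj, hP_left, hP_right]

theorem IsMetric.lineMap {g : V → V → R} (hg_symm : ∀ X Y, g X Y = g Y X)
    (hg_add : ∀ X Y Z, g (X + Y) Z = g X Z + g Y Z)
    (hg_smul : ∀ (f : R) (X Y : V), g (f • X) Y = f * g X Y)
    (h₁ : IsMetric g D nabla₁) (h₂ : IsMetric g D nabla₂) (t : R) :
    IsMetric g D (fun X Y => (1 - t) • nabla₁ X Y + t • nabla₂ X Y) := by
  have hg_add_right : ∀ X Y Z, g X (Y + Z) = g X Y + g X Z := fun X Y Z => by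
    rw [hg_symm, hg_add, hg_symm Y, hg_symm Z]
  have hg_smul_right : ∀ (f : R) (X Y : V), g X (f • Y) = f * g X Y := fun f X Y => by
    rw [hg_symm, hg_smul, hg_symm]
  intro X Y Z
  simp only [hg_add, hg_add_right, hg_smul, hg_smul_right]
  linear_combination (1 - t) * h₁ X Y Z + t * h₂ X Y Z

theorem commute_midpoint_conj (hP2 : ∀ Y, P (P Y) = Y) {t : R} (ht : 1 - t = t) (X Y : V) :
    (1 - t) • nabla X (P Y) + t • conj P nabla X (P Y) =
      P ((1 - t) • nabla X Y + t • conj P nabla X Y) := by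
  simp only [Connection.conj, hP2, map_add, map_smul, ht]
  exact add_comm _ _

end Connection

theorem stmt_9_general {M V : Type*} [AddCommGroup V] [Module (M → ℝ) V]
    (g : V → V → (M → ℝ)) (D : V → (M → ℝ) → (M → ℝ))
    (nabla : V → V → V)
    -- g is a Riemannian metric: symmetric and bilinear over functions
    (hg_symm : ∀ X Y, g X Y = g Y X)
    (hg_addl : ∀ X Y Z, g (X + Y) Z = g X Z + g Y Z)
    (hg_smull : ∀ (f : M → ℝ) (X Y : V), g (f • X) Y = f * g X Y)
    -- ∇ is the Levi-Civita connection of g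
    (haddl : ∀ X Y Z, nabla (X + Y) Z = nabla X Z + nabla Y Z)
    (haddr : ∀ X Y Z, nabla X (Y + Z) = nabla X Y + nabla X Z)
    (hsmull : ∀ (f : M → ℝ) (X Y : V), nabla (f • X) Y = f • nabla X Y)
    (hsmulr : ∀ (f : M → ℝ) (X Y : V), nabla X (f • Y) = D X f • Y + f • nabla X Y)
    (hcompat : ∀ X Y Z, D X (g Y Z) = g (nabla X Y) Z + g Y (nabla X Z))
    -- P is an almost product structure compatible with g
    (P : V →ₗ[M → ℝ] V)
    (hP2 : ∀ Y, P (P Y) = Y)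
    (hPg : ∀ X Y, g (P X) (P Y) = g X Y)
    -- the canonical connection ∇̄_X Y = ∇_X Y - (1/2)(∇_X P)(PY)
    (nablabar : V → V → V)
    (hbar : ∀ X Y, nablabar X Y =
      nabla X Y - (1/2 : M → ℝ) • (nabla X (P (P Y)) - P (nabla X (P Y)))) :
    -- ∇̄ is an affine connection
    (∀ X Y Z, nablabar (X + Y) Z = nablabar X Z + nablabar Y Z) ∧
    (∀ X Y Z, nablabar X (Y + Z) = nablabar X Y + nablabar X Z) ∧
    (∀ (f : M → ℝ) (X Y : V), nablabar (f • X) Y = f • nablabar X Y) ∧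
    (∀ (f : M → ℝ) (X Y : V), nablabar X (f • Y) = D X f • Y + f • nablabar X Y) ∧
    -- ∇̄P = 0
    (∀ X Y, nablabar X (P Y) = P (nablabar X Y)) ∧
    -- ∇̄g = 0
    (∀ X Y Z, D X (g Y Z) = g (nablabar X Y) Z + g Y (nablabar X Z)) := by
  have h_midpoint : nablabar =
      fun X Y => (1 - 1/2 : M → ℝ) • nabla X Y + (1/2 : M → ℝ) • Connection.conj P nabla X Y := by
    funext X Y
    rw [hbar, hP2, Connection.conj]
    module
  have h_half : (1 - 1/2 : M → ℝ) = 1/2 := by ext; norm_num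
  have h_affine : Connection.IsAffine D nabla := ⟨haddl, haddr, hsmull, hsmulr⟩
  have h_metric : Connection.IsMetric g D nabla := hcompat
  obtain ⟨h_add_left, h_add_right, h_smul_left, h_smul_right⟩ :=
    h_affine.lineMap (h_affine.conj hP2) (1/2)
  subst h_midpoint
  exact ⟨h_add_left, h_add_right, h_smul_left, h_smul_right,
    Connection.commute_midpoint_conj hP2 h_half,
    Connection.IsMetric.lineMap hg_symm hg_addl hg_smull h_metric (h_metric.conj hP2 hPg) (1/2)⟩

/-- Let P be a (1,1)-tensor field on a Riemannian manifold (M,g) with P² = I and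
g(PX,PY) = g(X,Y).  Define ∇̄_X Y = ∇_X Y - (1/2)(∇_X P)(PY), where ∇ is the
Levi-Civita connection.  Then ∇̄ is an affine connection satisfying ∇̄P = 0 and
∇̄g = 0.

Vector fields are modelled abstractly as a module `V` over the functions `M → ℝ`,
with `g` the metric, `D X f` the derivative of `f` along `X`, and `bracket` the
Lie bracket; `(∇_X P)(Y) = ∇_X(PY) - P(∇_X Y)`. -/
theorem stmt_9 {M V : Type*} [AddCommGroup V] [Module (M → ℝ) V]
    (g : V → V → (M → ℝ)) (D : V → (M → ℝ) → (M → ℝ)) (bracket : V → V → V)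
    (nabla : V → V → V)
    -- g is a Riemannian metric: symmetric and bilinear over functions
    (hg_symm : ∀ X Y, g X Y = g Y X)
    (hg_addl : ∀ X Y Z, g (X + Y) Z = g X Z + g Y Z)
    (hg_smull : ∀ (f : M → ℝ) (X Y : V), g (f • X) Y = f * g X Y)
    -- D is a derivation in the function argument
    (hD_add : ∀ X f₁ f₂, D X (f₁ + f₂) = D X f₁ + D X f₂)
    (hD_leibniz : ∀ X f₁ f₂, D X (f₁ * f₂) = D X f₁ * f₂ + f₁ * D X f₂)
    -- ∇ is the Levi-Civita connection of g
    (haddl : ∀ X Y Z, nabla (X + Y) Z = nabla X Z + nabla Y Z)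
    (haddr : ∀ X Y Z, nabla X (Y + Z) = nabla X Y + nabla X Z)
    (hsmull : ∀ (f : M → ℝ) (X Y : V), nabla (f • X) Y = f • nabla X Y)
    (hsmulr : ∀ (f : M → ℝ) (X Y : V), nabla X (f • Y) = D X f • Y + f • nabla X Y)
    (htf : ∀ X Y, nabla X Y - nabla Y X = bracket X Y)
    (hcompat : ∀ X Y Z, D X (g Y Z) = g (nabla X Y) Z + g Y (nabla X Z))
    -- P is an almost product structure compatible with g
    (P : V →ₗ[M → ℝ] V)
    (hP2 : ∀ Y, P (P Y) = Y)
    (hPg : ∀ X Y, g (P X) (P Y) = g X Y)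
    -- the canonical connection ∇̄_X Y = ∇_X Y - (1/2)(∇_X P)(PY)
    (nablabar : V → V → V)
    (hbar : ∀ X Y, nablabar X Y =
      nabla X Y - (1/2 : M → ℝ) • (nabla X (P (P Y)) - P (nabla X (P Y)))) :
    -- ∇̄ is an affine connection
    (∀ X Y Z, nablabar (X + Y) Z = nablabar X Z + nablabar Y Z) ∧
    (∀ X Y Z, nablabar X (Y + Z) = nablabar X Y + nablabar X Z) ∧
    (∀ (f : M → ℝ) (X Y : V), nablabar (f • X) Y = f • nablabar X Y) ∧
    (∀ (f : M → ℝ) (X Y : V), nablabar X (f • Y) = D X f • Y + f • nablabar X Y) ∧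
    -- ∇̄P = 0
    (∀ X Y, nablabar X (P Y) = P (nablabar X Y)) ∧
    -- ∇̄g = 0
    (∀ X Y Z, D X (g Y Z) = g (nablabar X Y) Z + g Y (nablabar X Z)) :=
  stmt_9_general g D nabla hg_symm hg_addl hg_smull haddl haddr hsmull hsmulr hcompat P hP2 hPg
    nablabar hbar
end

section
/- For an almost product Riemannian structure (P,g) with P² = I, g(PX,PY)=g(X,Y), canonical connection ∇̄_X Y = (1/2)(∇_X Y + P∇_X PY), and torsion T̄ of ∇̄, the Nijenhuis tensor of P satisfies N(P)(X,Y) = -2(T̄_{PX}PY + T̄_X Y). Consequently P is integrable (N(P)=0) iff T̄_{PX}PY = -T̄_X Y for all X,Y. -/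
/-!
Torsion-freeness of `∇` reduces the torsion of the canonical connection to
`T̄_X Y = ½ P(∇_X PY - ∇_Y PX) - ½ [X,Y]`. Adding the same expression at `(PX, PY)` and using
`P² = I`, the covariant derivatives recombine into brackets by torsion-freeness once more,
leaving `T̄_{PX} PY + T̄_X Y = ½ P([X,PY] + [PX,Y]) - ½ ([PX,PY] + [X,Y]) = -½ N(P)(X,Y)`.
-/

namespace AlmostProduct

variable {𝕜 V : Type*} [Field 𝕜] [AddCommGroup V] [Module 𝕜 V]

def canonicalConnection (P : V →ₗ[𝕜] V) (nabla : V → V → V) (X Y : V) : V :=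
  (1 / 2 : 𝕜) • (nabla X Y + P (nabla X (P Y)))

def torsion (D : V → V → V) (bracket : V → V → V) (X Y : V) : V :=
  D X Y - D Y X - bracket X Y

def nijenhuis (P : V →ₗ[𝕜] V) (bracket : V → V → V) (X Y : V) : V :=
  bracket (P X) (P Y) - P (bracket X (P Y)) - P (bracket (P X) Y) + bracket X Y

variable [NeZero (2 : 𝕜)] {bracket nabla : V → V → V} {P : V →ₗ[𝕜] V}

theorem torsion_canonicalConnection (htf : ∀ X Y, torsion nabla bracket X Y = 0) (X Y : V) :
    torsion (canonicalConnection P nabla) bracket X Y =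
      (1 / 2 : 𝕜) • P (nabla X (P Y) - nabla Y (P X)) - (1 / 2 : 𝕜) • bracket X Y := by
  have hXY : nabla X Y - nabla Y X = bracket X Y := sub_eq_zero.mp (htf X Y)
  simp only [torsion, canonicalConnection, map_sub, ← hXY]
  match_scalars <;> field_simp <;> ring

theorem nijenhuis_eq_neg_two_smul_torsion (htf : ∀ X Y, torsion nabla bracket X Y = 0)
    (hP2 : ∀ Y, P (P Y) = Y) (X Y : V) :
    nijenhuis P bracket X Y =
      (-2 : 𝕜) • (torsion (canonicalConnection P nabla) bracket (P X) (P Y)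
        + torsion (canonicalConnection P nabla) bracket X Y) := by
  have hbr : ∀ X Y, bracket X Y = nabla X Y - nabla Y X := fun X Y =>
    (sub_eq_zero.mp (htf X Y)).symm
  simp only [torsion_canonicalConnection htf, nijenhuis, hP2, hbr, map_sub]
  match_scalars <;> field_simp

theorem forall_nijenhuis_eq_zero_iff (htf : ∀ X Y, torsion nabla bracket X Y = 0)
    (hP2 : ∀ Y, P (P Y) = Y) :
    (∀ X Y, nijenhuis P bracket X Y = 0) ↔ ∀ X Y,
      torsion (canonicalConnection P nabla) bracket (P X) (P Y) =
        - torsion (canonicalConnection P nabla) bracket X Y := by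
  simp only [nijenhuis_eq_neg_two_smul_torsion htf hP2, smul_eq_zero, neg_eq_zero,
    two_ne_zero, false_or, add_eq_zero_iff_eq_neg]

end AlmostProduct

open AlmostProduct in
/-- For an almost product Riemannian structure (P,g) with canonical connection
∇̄_X Y = (1/2)(∇_X Y + P∇_X PY) and torsion T̄ of ∇̄, the Nijenhuis tensor of P
satisfies N(P)(X,Y) = -2(T̄_{PX}PY + T̄_X Y).  Consequently P is integrable
(N(P) = 0) iff T̄_{PX}PY = -T̄_X Y for all X, Y. -/
theorem stmt_10 {V : Type*} [AddCommGroup V] [Module ℝ V]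
    (bracket : V → V → V) (nabla : V → V → V)
    -- the Levi-Civita connection is torsion-free
    (htf : ∀ X Y, nabla X Y - nabla Y X = bracket X Y)
    -- P is an almost product structure
    (P : V →ₗ[ℝ] V) (hP2 : ∀ Y, P (P Y) = Y)
    -- the canonical connection
    (nablabar : V → V → V)
    (hbar : ∀ X Y, nablabar X Y = (1/2 : ℝ) • (nabla X Y + P (nabla X (P Y))))
    -- its torsion
    (Tbar : V → V → V)
    (hT : ∀ X Y, Tbar X Y = nablabar X Y - nablabar Y X - bracket X Y)
    -- the Nijenhuis tensor of P
    (N : V → V → V)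
    (hN : ∀ X Y, N X Y = bracket (P X) (P Y) - P (bracket X (P Y))
      - P (bracket (P X) Y) + bracket X Y) :
    (∀ X Y, N X Y = (-2 : ℝ) • (Tbar (P X) (P Y) + Tbar X Y)) ∧
    ((∀ X Y, N X Y = 0) ↔ ∀ X Y, Tbar (P X) (P Y) = - Tbar X Y) := by
  obtain rfl : nablabar = canonicalConnection P nabla := funext fun X => funext (hbar X)
  obtain rfl : Tbar = torsion (canonicalConnection P nabla) bracket :=
    funext fun X => funext (hT X)
  obtain rfl : N = nijenhuis P bracket := funext fun X => funext (hN X)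
  have htf' : ∀ X Y, torsion nabla bracket X Y = 0 := fun X Y => sub_eq_zero.mpr (htf X Y)
  exact ⟨nijenhuis_eq_neg_two_smul_torsion htf' hP2, forall_nijenhuis_eq_zero_iff htf' hP2⟩
end

section
/- An almost product Riemannian structure (P,g) is nearly particular (i.e., h_X X = 0 for all X, where h = ∇ - ∇̄) if and only if it is particular (h = 0, i.e., ∇P = 0). Equivalently: if (∇_X P)X = 0 for all vector fields X, then ∇P = 0. -/
/-!
Put `A X Y = (∇_X P) Y`. Since `∇` is metric and `P` is a `g`-symmetric involution,
`T X Y Z = g (A X Y) Z` is symmetric in `Y, Z`; if moreover `A X X = 0` for all `X`,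
polarization makes `T` antisymmetric in `X, Y`. Alternating the two swaps three times turns
`T X Y Z` into `-T X Y Z`, so `T = 0` and nondegeneracy of `g` gives `∇P = 0`. Finally
`h_X Y = ½ (∇_X P)(P Y)` vanishes exactly when `(∇_X P) Y` does, because `P` is an involution.
-/

theorem eq_zero_of_antisymm_of_symm {V S : Type*} [AddCommGroup S] [IsAddTorsionFree S]
    (T : V → V → V → S) (hanti : ∀ X Y Z, T X Y Z = -T Y X Z)
    (hsymm : ∀ X Y Z, T X Y Z = T X Z Y) (X Y Z : V) : T X Y Z = 0 := by
  have hflip : T X Y Z = -T X Y Z :=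
    calc T X Y Z = T X Z Y := hsymm ..
      _ = -T Z X Y := hanti ..
      _ = -T Z Y X := by rw [hsymm]
      _ = T Y Z X := by rw [hanti, neg_neg]
      _ = T Y X Z := hsymm ..
      _ = -T X Y Z := hanti ..
  exact neg_eq_self.mp hflip.symm

theorem eq_neg_swap_of_apply_self_eq_zero {V W : Type*} [AddCommGroup V] [AddCommGroup W]
    (A : V → V → W) (hl : ∀ X Y Z, A (X + Y) Z = A X Z + A Y Z)
    (hr : ∀ X Y Z, A X (Y + Z) = A X Y + A X Z) (hA : ∀ X, A X X = 0) (X Y : V) :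
    A X Y = -A Y X := by
  have h := hA (X + Y)
  rw [hl, hr, hr, hA, hA, zero_add, add_zero] at h
  exact eq_neg_of_add_eq_zero_left h

section AlmostProduct

variable {R V S : Type*} [Semiring R] [AddCommGroup V] [Module R V]

/-- `covDerivEnd nabla P X Y` is `(∇_X P) Y`. -/
def covDerivEnd (nabla : V → V → V) (P : V →ₗ[R] V) (X Y : V) : V :=
  nabla X (P Y) - P (nabla X Y)

theorem covDerivEnd_add_left (nabla : V → V → V) (P : V →ₗ[R] V)
    (haddl : ∀ X Y Z, nabla (X + Y) Z = nabla X Z + nabla Y Z) (X Y Z : V) :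
    covDerivEnd nabla P (X + Y) Z = covDerivEnd nabla P X Z + covDerivEnd nabla P Y Z := by
  simp only [covDerivEnd, haddl, map_add]
  abel

theorem covDerivEnd_add_right (nabla : V → V → V) (P : V →ₗ[R] V)
    (haddr : ∀ X Y Z, nabla X (Y + Z) = nabla X Y + nabla X Z) (X Y Z : V) :
    covDerivEnd nabla P X (Y + Z) = covDerivEnd nabla P X Y + covDerivEnd nabla P X Z := by
  simp only [covDerivEnd, haddr, map_add]
  abel

theorem apply_left_eq_apply_right_of_involutive_isometry (g : V → V → S) (P : V →ₗ[R] V)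
    (hP2 : ∀ Y, P (P Y) = Y) (hPg : ∀ X Y, g (P X) (P Y) = g X Y) (Y Z : V) :
    g (P Y) Z = g Y (P Z) := by
  rw [← hPg, hP2]

variable [AddCommGroup S]

theorem covDerivEnd_metric_symm (g : V → V → S) (D : V → S → S) (nabla : V → V → V)
    (P : V →ₗ[R] V) (hg_symm : ∀ X Y, g X Y = g Y X)
    (hg_addl : ∀ X Y Z, g (X + Y) Z = g X Z + g Y Z)
    (hcompat : ∀ X Y Z, D X (g Y Z) = g (nabla X Y) Z + g Y (nabla X Z))
    (hP2 : ∀ Y, P (P Y) = Y) (hPg : ∀ X Y, g (P X) (P Y) = g X Y) (X Y Z : V) :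
    g (covDerivEnd nabla P X Y) Z = g (covDerivEnd nabla P X Z) Y := by
  have hPsym := apply_left_eq_apply_right_of_involutive_isometry g P hP2 hPg
  have hsub (U W : V) : g (U - W) = g U - g W :=
    funext fun Z => (AddMonoidHom.mk' (g · Z) (hg_addl · · Z)).map_sub U W
  have hcompatP : g (nabla X (P Y)) Z + g (P Y) (nabla X Z)
      = g (nabla X Y) (P Z) + g Y (nabla X (P Z)) := by
    rw [← hcompat, ← hcompat, hPsym]
  rw [hg_symm (P Y), hg_symm Y] at hcompatP
  simp only [covDerivEnd, hsub, Pi.sub_apply, hPsym]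
  rw [sub_eq_sub_iff_add_eq_add, hcompatP, add_comm]

theorem covDerivEnd_eq_zero_of_apply_self_eq_zero [IsAddTorsionFree S] (g : V → V → S)
    (D : V → S → S) (nabla : V → V → V) (P : V →ₗ[R] V) (hg_symm : ∀ X Y, g X Y = g Y X)
    (hg_addl : ∀ X Y Z, g (X + Y) Z = g X Z + g Y Z)
    (hg_nondeg : ∀ X, (∀ Z, g X Z = 0) → X = 0)
    (haddl : ∀ X Y Z, nabla (X + Y) Z = nabla X Z + nabla Y Z)
    (haddr : ∀ X Y Z, nabla X (Y + Z) = nabla X Y + nabla X Z)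
    (hcompat : ∀ X Y Z, D X (g Y Z) = g (nabla X Y) Z + g Y (nabla X Z))
    (hP2 : ∀ Y, P (P Y) = Y) (hPg : ∀ X Y, g (P X) (P Y) = g X Y)
    (hnear : ∀ X, covDerivEnd nabla P X X = 0) (X Y : V) :
    covDerivEnd nabla P X Y = 0 := by
  have hanti := eq_neg_swap_of_apply_self_eq_zero _ (covDerivEnd_add_left nabla P haddl)
    (covDerivEnd_add_right nabla P haddr) hnear
  have hneg (U Z : V) : g (-U) Z = -g U Z := (AddMonoidHom.mk' (g · Z) (hg_addl · · Z)).map_neg U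
  have hT := eq_zero_of_antisymm_of_symm (fun X Y Z => g (covDerivEnd nabla P X Y) Z)
    (fun X Y Z => by rw [hanti X Y, hneg])
    (covDerivEnd_metric_symm g D nabla P hg_symm hg_addl hcompat hP2 hPg)
  exact hg_nondeg _ (hT X Y)

theorem covDerivEnd_apply_involution_eq_zero_iff (nabla : V → V → V) (P : V →ₗ[R] V)
    (hP2 : ∀ Y, P (P Y) = Y) (X Y : V) :
    covDerivEnd nabla P X (P Y) = 0 ↔ covDerivEnd nabla P X Y = 0 := by
  rw [covDerivEnd, covDerivEnd, hP2, sub_eq_zero, sub_eq_zero]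
  constructor <;> intro h <;> rw [h, hP2]

end AlmostProduct

theorem stmt_11_general {M V : Type*} [AddCommGroup V] [Module (M → ℝ) V]
    (g : V → V → (M → ℝ)) (D : V → (M → ℝ) → (M → ℝ))
    (nabla : V → V → V)
    -- g is a Riemannian metric: symmetric, bilinear over functions, nondegenerate
    (hg_symm : ∀ X Y, g X Y = g Y X)
    (hg_addl : ∀ X Y Z, g (X + Y) Z = g X Z + g Y Z)
    (hg_nondeg : ∀ X, (∀ Z, g X Z = 0) → X = 0)
    -- ∇ is the Levi-Civita connection of g
    (haddl : ∀ X Y Z, nabla (X + Y) Z = nabla X Z + nabla Y Z)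
    (haddr : ∀ X Y Z, nabla X (Y + Z) = nabla X Y + nabla X Z)
    (hcompat : ∀ X Y Z, D X (g Y Z) = g (nabla X Y) Z + g Y (nabla X Z))
    -- P is an almost product structure compatible with g
    (P : V →ₗ[M → ℝ] V)
    (hP2 : ∀ Y, P (P Y) = Y)
    (hPg : ∀ X Y, g (P X) (P Y) = g X Y)
    -- the second fundamental tensor field h_X Y = (1/2)(∇_X P)(PY)
    (h : V → V → V)
    (hdef : ∀ X Y, h X Y = (1/2 : M → ℝ) • (nabla X (P (P Y)) - P (nabla X (P Y)))) :
    -- nearly particular ↔ particular, i.e. (∇_X P)X = 0 for all X ↔ ∇P = 0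
    ((∀ X, h X X = 0) ↔ ∀ X Y, h X Y = 0) ∧
    ((∀ X, nabla X (P X) = P (nabla X X)) ↔ ∀ X Y, nabla X (P Y) = P (nabla X Y)) := by
  have hhalf : IsUnit (1/2 : M → ℝ) := isUnit_iff_exists_inv.mpr ⟨2, by ext; norm_num⟩
  have hh (X Y : V) : h X Y = 0 ↔ covDerivEnd nabla P X Y = 0 := by
    rw [hdef, hhalf.smul_eq_zero]
    exact covDerivEnd_apply_involution_eq_zero_iff nabla P hP2 X Y
  have hcov (X Y : V) : covDerivEnd nabla P X Y = 0 ↔ nabla X (P Y) = P (nabla X Y) := sub_eq_zero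
  have hparticular := covDerivEnd_eq_zero_of_apply_self_eq_zero g D nabla P hg_symm hg_addl
    hg_nondeg haddl haddr hcompat hP2 hPg
  simp only [hh, hcov] at hparticular ⊢
  exact ⟨⟨hparticular, fun hXY X => hXY X X⟩, ⟨hparticular, fun hXY X => hXY X X⟩⟩

/-- An almost product Riemannian structure (P,g) is nearly particular
(h_X X = 0 for all X, where h = ∇ - ∇̄, equivalently (∇_X P)X = 0 for all X) if
and only if it is particular (h = 0, i.e. ∇P = 0).

Vector fields are modelled abstractly as a module `V` over the functions `M → ℝ`,
with `g` the (nondegenerate) metric, `D X f` the derivative of `f` along `X`, and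
`bracket` the Lie bracket. -/
theorem stmt_11 {M V : Type*} [AddCommGroup V] [Module (M → ℝ) V]
    (g : V → V → (M → ℝ)) (D : V → (M → ℝ) → (M → ℝ)) (bracket : V → V → V)
    (nabla : V → V → V)
    -- g is a Riemannian metric: symmetric, bilinear over functions, nondegenerate
    (hg_symm : ∀ X Y, g X Y = g Y X)
    (hg_addl : ∀ X Y Z, g (X + Y) Z = g X Z + g Y Z)
    (hg_smull : ∀ (f : M → ℝ) (X Y : V), g (f • X) Y = f * g X Y)
    (hg_nondeg : ∀ X, (∀ Z, g X Z = 0) → X = 0)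
    -- D is a derivation in the function argument
    (hD_add : ∀ X f₁ f₂, D X (f₁ + f₂) = D X f₁ + D X f₂)
    (hD_leibniz : ∀ X f₁ f₂, D X (f₁ * f₂) = D X f₁ * f₂ + f₁ * D X f₂)
    -- ∇ is the Levi-Civita connection of g
    (haddl : ∀ X Y Z, nabla (X + Y) Z = nabla X Z + nabla Y Z)
    (haddr : ∀ X Y Z, nabla X (Y + Z) = nabla X Y + nabla X Z)
    (hsmull : ∀ (f : M → ℝ) (X Y : V), nabla (f • X) Y = f • nabla X Y)
    (hsmulr : ∀ (f : M → ℝ) (X Y : V), nabla X (f • Y) = D X f • Y + f • nabla X Y)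
    (htf : ∀ X Y, nabla X Y - nabla Y X = bracket X Y)
    (hcompat : ∀ X Y Z, D X (g Y Z) = g (nabla X Y) Z + g Y (nabla X Z))
    -- P is an almost product structure compatible with g
    (P : V →ₗ[M → ℝ] V)
    (hP2 : ∀ Y, P (P Y) = Y)
    (hPg : ∀ X Y, g (P X) (P Y) = g X Y)
    -- the second fundamental tensor field h_X Y = (1/2)(∇_X P)(PY)
    (h : V → V → V)
    (hdef : ∀ X Y, h X Y = (1/2 : M → ℝ) • (nabla X (P (P Y)) - P (nabla X (P Y)))) :
    -- nearly particular ↔ particular, i.e. (∇_X P)X = 0 for all X ↔ ∇P = 0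
    ((∀ X, h X X = 0) ↔ ∀ X Y, h X Y = 0) ∧
    ((∀ X, nabla X (P X) = P (nabla X X)) ↔ ∀ X Y, nabla X (P Y) = P (nabla X Y)) :=
  stmt_11_general g D nabla hg_symm hg_addl hg_nondeg haddl haddr hcompat P hP2 hPg h hdef
end

section
/- Let S be an endomorphism field on a Riemannian manifold (M,g) with S^k = I, g(SX,SY) = g(X,Y), and ∇ the Levi-Civita connection. Then the connection ∇̃_X Y = (1/k) Σ_{j=0}^{k-1} S^j ∇_X (S^{k-j} Y) satisfies ∇̃S = 0 and ∇̃g = 0. -/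
/-!
Averaging ∇ over the cyclic group generated by `S` makes it `S`-equivariant: applying `S`
to the average only shifts the summation index, and the term with index `k` equals the one
with index `0` because `S ^ k = 1`. Each summand `S ^ j ∘ ∇_X ∘ S ^ (k - j)` is the
conjugate of `∇` by the isometry `S ^ j`, hence again compatible with `g`, and so is their
mean.
-/

open Finset

theorem Finset.sum_range_succ_eq_sum_range_of_eq {A : Type*} [AddCommMonoid A] {f : ℕ → A}
    {k : ℕ} (hf : f k = f 0) : ∑ j ∈ range k, f (j + 1) = ∑ j ∈ range k, f j := by
  cases k with
  | zero => rfl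
  | succ m => rw [sum_range_succ, hf, ← sum_range_succ']

namespace Module.End

variable {R V : Type*} [Semiring R] [AddCommMonoid V] [Module R V]

theorem sum_pow_apply_pow_sub_apply_comp_eq {S : V →ₗ[R] V} {k : ℕ} (hSk : S ^ k = 1)
    (F : V → V) (Y : V) :
    ∑ j ∈ Finset.range k, (S ^ j) (F ((S ^ (k - j)) (S Y))) =
      S (∑ j ∈ Finset.range k, (S ^ j) (F ((S ^ (k - j)) Y))) := by
  have hshift : ∀ j ∈ Finset.range k, S ((S ^ j) (F ((S ^ (k - j)) Y))) =
      (S ^ (j + 1)) (F ((S ^ (k - (j + 1))) (S Y))) := by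
    intro j hj
    have hkj : k - j = k - (j + 1) + 1 := by have := mem_range.mp hj; omega
    rw [hkj, pow_succ, pow_succ']
    rfl
  rw [map_sum, sum_congr rfl hshift]
  refine (sum_range_succ_eq_sum_range_of_eq ?_).symm
  simp [hSk]

theorem pow_preserves_form {S : V →ₗ[R] V} {g : V → V → R}
    (hSg : ∀ X Y, g (S X) (S Y) = g X Y) (j : ℕ) (X Y : V) :
    g ((S ^ j) X) ((S ^ j) Y) = g X Y := by
  induction j generalizing X Y with
  | zero => rfl
  | succ j ih => rw [pow_succ, mul_apply, mul_apply, ih, hSg]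

end Module.End

theorem metric_compat_conj {R V : Type*} [Add R] {g : V → V → R} {D : V → R → R}
    {nabla : V → V → V}
    (hcompat : ∀ X Y Z, D X (g Y Z) = g (nabla X Y) Z + g Y (nabla X Z))
    {T U : V → V} (hT : ∀ X Y, g (T X) (T Y) = g X Y) (hTU : ∀ Y, T (U Y) = Y) (X Y Z : V) :
    D X (g Y Z) = g (T (nabla X (U Y))) Z + g Y (T (nabla X (U Z))) := by
  have hU : ∀ Y Z, g (U Y) (U Z) = g Y Z := fun Y Z => by rw [← hT, hTU, hTU]
  calc D X (g Y Z) = D X (g (U Y) (U Z)) := by rw [hU]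
    _ = g (nabla X (U Y)) (U Z) + g (U Y) (nabla X (U Z)) := hcompat _ _ _
    _ = g (T (nabla X (U Y))) (T (U Z)) + g (T (U Y)) (T (nabla X (U Z))) := by rw [hT, hT]
    _ = g (T (nabla X (U Y))) Z + g Y (T (nabla X (U Z))) := by rw [hTU, hTU]

theorem stmt_19_general {M V : Type*} [AddCommGroup V] [Module (M → ℝ) V]
    (g : V → V → (M → ℝ)) (D : V → (M → ℝ) → (M → ℝ))
    (nabla : V → V → V)
    -- g is a Riemannian metric
    (hg_symm : ∀ X Y, g X Y = g Y X)
    (hg_addl : ∀ X Y Z, g (X + Y) Z = g X Z + g Y Z)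
    (hg_smull : ∀ (f : M → ℝ) (X Y : V), g (f • X) Y = f * g X Y)
    -- ∇ is the Levi-Civita connection of g
    (hcompat : ∀ X Y Z, D X (g Y Z) = g (nabla X Y) Z + g Y (nabla X Z))
    -- S is an endomorphism field with S^k = I, compatible with g
    (k : ℕ) (hk : 0 < k)
    (S : V →ₗ[M → ℝ] V)
    (hSk : ∀ Y, (S ^ k) Y = Y)
    (hSg : ∀ X Y, g (S X) (S Y) = g X Y)
    -- the connection ∇̃_X Y = (1/k) Σ_{j=0}^{k-1} S^j ∇_X (S^{k-j} Y)
    (tnabla : V → V → V)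
    (htilde : ∀ X Y, tnabla X Y =
      (1 / (k : M → ℝ)) • ∑ j ∈ Finset.range k, (S ^ j) (nabla X ((S ^ (k - j)) Y))) :
    -- ∇̃S = 0
    (∀ X Y, tnabla X (S Y) = S (tnabla X Y)) ∧
    -- ∇̃g = 0
    (∀ X Y Z, D X (g Y Z) = g (tnabla X Y) Z + g Y (tnabla X Z)) := by
  have hSk' : S ^ k = 1 := LinearMap.ext hSk
  refine ⟨fun X Y => ?_, fun X Y Z => ?_⟩
  · rw [htilde, htilde, map_smul, Module.End.sum_pow_apply_pow_sub_apply_comp_eq hSk']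
  · have g_sum (f : ℕ → V) (W : V) :
        g (∑ j ∈ range k, f j) W = ∑ j ∈ range k, g (f j) W :=
      map_sum (AddMonoidHom.mk' (g · W) (hg_addl · · W)) f _
    have hterm : ∀ j ∈ range k, g ((S ^ j) (nabla X ((S ^ (k - j)) Y))) Z +
        g ((S ^ j) (nabla X ((S ^ (k - j)) Z))) Y = D X (g Y Z) := fun j hj => by
      have hinv (W : V) : (S ^ j) ((S ^ (k - j)) W) = W := by
        rw [← Module.End.mul_apply, ← pow_add, Nat.add_sub_cancel' (mem_range.mp hj).le, hSk',
          Module.End.one_apply]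
      rw [hg_symm ((S ^ j) _) Y]
      exact (metric_compat_conj hcompat (Module.End.pow_preserves_form hSg j) hinv X Y Z).symm
    rw [hg_symm Y (tnabla X Z), htilde, htilde, hg_smull, hg_smull, g_sum, g_sum, ← mul_add,
      ← sum_add_distrib, sum_congr rfl hterm, sum_const, card_range]
    funext t
    simp [hk.ne']

/-- Let S be an endomorphism field on a Riemannian manifold (M,g) with S^k = I and
g(SX,SY) = g(X,Y), and ∇ the Levi-Civita connection.  Then the connection
∇̃_X Y = (1/k) Σ_{j=0}^{k-1} S^j ∇_X (S^{k-j} Y) satisfies ∇̃S = 0 and ∇̃g = 0. -/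
theorem stmt_19 {M V : Type*} [AddCommGroup V] [Module (M → ℝ) V]
    (g : V → V → (M → ℝ)) (D : V → (M → ℝ) → (M → ℝ)) (bracket : V → V → V)
    (nabla : V → V → V)
    -- g is a Riemannian metric
    (hg_symm : ∀ X Y, g X Y = g Y X)
    (hg_addl : ∀ X Y Z, g (X + Y) Z = g X Z + g Y Z)
    (hg_smull : ∀ (f : M → ℝ) (X Y : V), g (f • X) Y = f * g X Y)
    -- ∇ is the Levi-Civita connection of g
    (htf : ∀ X Y, nabla X Y - nabla Y X = bracket X Y)
    (hcompat : ∀ X Y Z, D X (g Y Z) = g (nabla X Y) Z + g Y (nabla X Z))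
    -- S is an endomorphism field with S^k = I, compatible with g
    (k : ℕ) (hk : 0 < k)
    (S : V →ₗ[M → ℝ] V)
    (hSk : ∀ Y, (S ^ k) Y = Y)
    (hSg : ∀ X Y, g (S X) (S Y) = g X Y)
    -- the connection ∇̃_X Y = (1/k) Σ_{j=0}^{k-1} S^j ∇_X (S^{k-j} Y)
    (tnabla : V → V → V)
    (htilde : ∀ X Y, tnabla X Y =
      (1 / (k : M → ℝ)) • ∑ j ∈ Finset.range k, (S ^ j) (nabla X ((S ^ (k - j)) Y))) :
    -- ∇̃S = 0
    (∀ X Y, tnabla X (S Y) = S (tnabla X Y)) ∧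
    -- ∇̃g = 0
    (∀ X Y Z, D X (g Y Z) = g (tnabla X Y) Z + g Y (tnabla X Z)) :=
  stmt_19_general g D nabla hg_symm hg_addl hg_smull hcompat k hk S hSk hSg tnabla htilde
end
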